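/- Let 1 < p ≤ 2, δ ≥ 0, a ≥ 0, and let φ_a be the shifted N-function with φ'_a(s) = (δ+a+s)^{p-2}·(a+s)·s/(a+s) normalized as φ'_a(s) := φ'(a+s)·s/(a+s), φ'(t) = (δ+t)^{p-2}t. For every ε > 0 there exists c_ε > 0 depending only on ε and p such that for all s, t ≥ 0: t·φ'_a(s) + φ'_a(t)·s ≤ ε·φ_a(t) + c_ε·φ_a(s). -/

import Mathlib

open scoped BigOperators

noncomputable def phiN' (p δ t : ℝ) : ℝ := (δ + t) ^ (p - 2) * t

/-- derivative of the shifted N-function: `φ'_a(s) = φ'(a+s)·s/(a+s)` -/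
noncomputable def phiShift' (p δ a s : ℝ) : ℝ := phiN' p δ (a + s) * (s / (a + s))

noncomputable def phiShift (p δ a t : ℝ) : ℝ :=
  ∫ s in (0:ℝ)..t, phiShift' p δ a s

lemma aux_g_nonneg (p b x : ℝ) (hb : 0 ≤ b) (hx : 0 ≤ x) :
    0 ≤ (b + x) ^ (p - 2) * x :=
  mul_nonneg (Real.rpow_nonneg (by linarith) _) hx

lemma aux_mono (p b : ℝ) (hp : 1 < p) (hb : 0 ≤ b) {x y : ℝ} (hx : 0 ≤ x) (hxy : x ≤ y) :
    (b + x) ^ (p - 2) * x ≤ (b + y) ^ (p - 2) * y := by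
  rcases eq_or_lt_of_le hx with h0 | hx0
  · rw [← h0, mul_zero]
    exact aux_g_nonneg p b y hb (by linarith)
  · have hy : 0 < y := lt_of_lt_of_le hx0 hxy
    have hbx : 0 < b + x := by linarith
    have hby : 0 < b + y := by linarith
    have e1 : (b + x) ^ (p - 2) * x = (x / (b + x)) * (b + x) ^ (p - 1) := by
      rw [show p - 1 = (p - 2) + 1 by ring, Real.rpow_add_one hbx.ne']
      field_simp
    have e2 : (b + y) ^ (p - 2) * y = (y / (b + y)) * (b + y) ^ (p - 1) := by
      rw [show p - 1 = (p - 2) + 1 by ring, Real.rpow_add_one hby.ne']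
      field_simp
    rw [e1, e2]
    apply mul_le_mul
    · rw [div_le_div_iff₀ hbx hby]; nlinarith
    · exact Real.rpow_le_rpow hbx.le (by linarith) (by linarith)
    · positivity
    · positivity

lemma aux_scale (p b K s : ℝ) (hp : 1 < p) (hp2 : p ≤ 2) (hb : 0 ≤ b) (hK : 1 ≤ K)
    (hs : 0 ≤ s) :
    K ^ (p - 1) * ((b + s) ^ (p - 2) * s) ≤ (b + K * s) ^ (p - 2) * (K * s) := by
  rcases eq_or_lt_of_le hs with h0 | hs0
  · rw [← h0]; simp
  · have hK0 : 0 < K := by linarith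
    have hbs : 0 < b + s := by linarith
    have hbKs : 0 < b + K * s := by nlinarith
    have h1 : (K * (b + s)) ^ (p - 2) ≤ (b + K * s) ^ (p - 2) := by
      apply Real.rpow_le_rpow_of_nonpos hbKs (by nlinarith) (by linarith)
    have h2 : (K * (b + s)) ^ (p - 2) = K ^ (p - 2) * (b + s) ^ (p - 2) :=
      Real.mul_rpow hK0.le hbs.le
    have h3 : K ^ (p - 2) * K = K ^ (p - 1) := by
      rw [show p - 1 = (p - 2) + 1 by ring, Real.rpow_add_one hK0.ne']
    calc K ^ (p - 1) * ((b + s) ^ (p - 2) * s)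
        = (K ^ (p - 2) * (b + s) ^ (p - 2)) * (K * s) := by rw [← h3]; ring
      _ = (K * (b + s)) ^ (p - 2) * (K * s) := by rw [h2]
      _ ≤ (b + K * s) ^ (p - 2) * (K * s) :=
          mul_le_mul_of_nonneg_right h1 (by positivity)

lemma phiShift'_eq (p δ a s : ℝ) (ha : 0 ≤ a) (hs : 0 ≤ s) :
    phiShift' p δ a s = (δ + a + s) ^ (p - 2) * s := by
  unfold phiShift' phiN'
  rcases eq_or_lt_of_le (add_nonneg ha hs) with h | h
  · have ha0 : a = 0 := by linarith
    have hs0 : s = 0 := by linarith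
    simp [ha0, hs0]
  · rw [← add_assoc]
    field_simp

lemma phiShift_lower (p δ a t : ℝ) (hp : 1 < p) (hp2 : p ≤ 2) (hδ : 0 ≤ δ) (ha : 0 ≤ a)
    (ht : 0 ≤ t) :
    (δ + a + t) ^ (p - 2) * t * t ≤ 2 * phiShift p δ a t := by
  have hb : 0 ≤ δ + a := add_nonneg hδ ha
  have heq : phiShift p δ a t = ∫ σ in (0:ℝ)..t, (δ + a + σ) ^ (p - 2) * σ := by
    unfold phiShift
    apply intervalIntegral.integral_congr
    intro σ hσ
    rw [Set.uIcc_of_le ht] at hσ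
    exact phiShift'_eq p δ a σ ha hσ.1
  have hint : IntervalIntegrable (fun σ => (δ + a + σ) ^ (p - 2) * σ)
      MeasureTheory.volume 0 t := by
    apply MonotoneOn.intervalIntegrable
    rw [Set.uIcc_of_le ht]
    intro x hx y _ hxy
    exact aux_mono p (δ + a) hp hb hx.1 hxy
  have hint2 : IntervalIntegrable (fun σ => (δ + a + t) ^ (p - 2) * σ)
      MeasureTheory.volume 0 t :=
    (continuous_const.mul continuous_id).intervalIntegrable 0 t
  have hmono : (∫ σ in (0:ℝ)..t, (δ + a + t) ^ (p - 2) * σ) ≤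
      ∫ σ in (0:ℝ)..t, (δ + a + σ) ^ (p - 2) * σ := by
    apply intervalIntegral.integral_mono_on ht hint2 hint
    intro σ hσ
    rcases eq_or_lt_of_le hσ.1 with h0 | h0
    · rw [← h0]; simp
    · have : (δ + a + t) ^ (p - 2) ≤ (δ + a + σ) ^ (p - 2) :=
        Real.rpow_le_rpow_of_nonpos (by linarith) (by linarith [hσ.2]) (by linarith)
      exact mul_le_mul_of_nonneg_right this h0.le
  have hcalc : (∫ σ in (0:ℝ)..t, (δ + a + t) ^ (p - 2) * σ) =
      (δ + a + t) ^ (p - 2) * (t ^ 2 / 2) := by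
    rw [intervalIntegral.integral_const_mul, integral_id]
    ring
  rw [heq]
  rw [hcalc] at hmono
  nlinarith [hmono]

/-- Young-type inequality: for every ε > 0 there is `c_ε` depending only on ε and p with
    `t·φ'_a(s) + φ'_a(t)·s ≤ ε·φ_a(t) + c_ε·φ_a(s)` for all `s, t ≥ 0`. -/
theorem stmt_3 (p : ℝ) (hp : 1 < p) (hp2 : p ≤ 2) :
    ∀ ε : ℝ, 0 < ε → ∃ c : ℝ, 0 < c ∧
      ∀ δ a s t : ℝ, 0 ≤ δ → 0 ≤ a → 0 ≤ s → 0 ≤ t →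
        t * phiShift' p δ a s + phiShift' p δ a t * s ≤
          ε * phiShift p δ a t + c * phiShift p δ a s := by
  intro ε hε
  set K : ℝ := max 1 ((4 / ε) ^ (p - 1)⁻¹) with hKdef
  have hK1 : 1 ≤ K := le_max_left _ _
  have hKe : 4 / ε ≤ K ^ (p - 1) := by
    have h1 : ((4 / ε) ^ (p - 1)⁻¹) ^ (p - 1) = 4 / ε :=
      Real.rpow_inv_rpow (by positivity) (by linarith)
    calc 4 / ε = ((4 / ε) ^ (p - 1)⁻¹) ^ (p - 1) := h1.symm
      _ ≤ K ^ (p - 1) :=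
          Real.rpow_le_rpow (Real.rpow_nonneg (by positivity) _) (le_max_right _ _)
            (by linarith)
  refine ⟨4 * K + 4, by linarith, ?_⟩
  intro δ a s t hδ ha hs ht
  rw [phiShift'_eq p δ a s ha hs, phiShift'_eq p δ a t ha ht]
  set b : ℝ := δ + a with hbdef
  have hb : 0 ≤ b := add_nonneg hδ ha
  have gs_nonneg : 0 ≤ (b + s) ^ (p - 2) * s := aux_g_nonneg p b s hb hs
  have gt_nonneg : 0 ≤ (b + t) ^ (p - 2) * t := aux_g_nonneg p b t hb ht
  have core : t * ((b + s) ^ (p - 2) * s) + ((b + t) ^ (p - 2) * t) * s ≤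
      ε / 2 * ((b + t) ^ (p - 2) * t * t) + (2 * K + 2) * ((b + s) ^ (p - 2) * s * s) := by
    rcases eq_or_lt_of_le hs with h0 | hs0
    · rw [← h0]
      simp only [mul_zero, zero_mul, add_zero]
      positivity
    · rcases le_or_gt t s with hts | hst
      · have h1 : (b + t) ^ (p - 2) * t ≤ (b + s) ^ (p - 2) * s := aux_mono p b hp hb ht hts
        have h2 : t * ((b + s) ^ (p - 2) * s) ≤ s * ((b + s) ^ (p - 2) * s) :=
          mul_le_mul_of_nonneg_right hts gs_nonneg
        have h3 : ((b + t) ^ (p - 2) * t) * s ≤ ((b + s) ^ (p - 2) * s) * s :=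
          mul_le_mul_of_nonneg_right h1 hs
        have h4 : 0 ≤ ε / 2 * ((b + t) ^ (p - 2) * t * t) := by positivity
        nlinarith [mul_nonneg (mul_nonneg gs_nonneg hs) (by linarith : (0:ℝ) ≤ 2 * K)]
      · -- s < t
        have hbs : 0 < b + s := by linarith
        have hrle : (b + t) ^ (p - 2) ≤ (b + s) ^ (p - 2) :=
          Real.rpow_le_rpow_of_nonpos hbs (by linarith) (by linarith)
        have hgts : ((b + t) ^ (p - 2) * t) * s ≤ t * ((b + s) ^ (p - 2) * s) := by
          have := mul_le_mul_of_nonneg_right hrle (by positivity : (0:ℝ) ≤ t * s)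
          nlinarith
        rcases le_or_gt t (K * s) with hK2 | hK3
        · have h2 : t * ((b + s) ^ (p - 2) * s) ≤ (K * s) * ((b + s) ^ (p - 2) * s) :=
            mul_le_mul_of_nonneg_right hK2 gs_nonneg
          have h4 : 0 ≤ ε / 2 * ((b + t) ^ (p - 2) * t * t) := by positivity
          nlinarith [mul_nonneg (mul_nonneg gs_nonneg hs) (by linarith : (0:ℝ) ≤ 2)]
        · -- K * s < t
          have key1 : K ^ (p - 1) * ((b + s) ^ (p - 2) * s) ≤ (b + K * s) ^ (p - 2) * (K * s) :=
            aux_scale p b K s hp hp2 hb hK1 hs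
          have key2 : (b + K * s) ^ (p - 2) * (K * s) ≤ (b + t) ^ (p - 2) * t :=
            aux_mono p b hp hb (by positivity) hK3.le
          have key3 : 4 / ε * ((b + s) ^ (p - 2) * s) ≤ K ^ (p - 1) * ((b + s) ^ (p - 2) * s) :=
            mul_le_mul_of_nonneg_right hKe gs_nonneg
          have key : 4 / ε * ((b + s) ^ (p - 2) * s) ≤ (b + t) ^ (p - 2) * t := by linarith
          have key' : (b + s) ^ (p - 2) * s ≤ ε / 4 * ((b + t) ^ (p - 2) * t) := by
            have h := mul_le_mul_of_nonneg_left key (by positivity : (0:ℝ) ≤ ε / 4)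
            have he : ε / 4 * (4 / ε * ((b + s) ^ (p - 2) * s)) = (b + s) ^ (p - 2) * s := by
              field_simp
            linarith [he ▸ h]
          have h5 : t * ((b + s) ^ (p - 2) * s) ≤ t * (ε / 4 * ((b + t) ^ (p - 2) * t)) :=
            mul_le_mul_of_nonneg_left key' ht
          nlinarith [mul_nonneg (mul_nonneg gs_nonneg hs) (by linarith : (0:ℝ) ≤ 2 * K + 2)]
  have l1 : (b + t) ^ (p - 2) * t * t ≤ 2 * phiShift p δ a t := phiShift_lower p δ a t hp hp2 hδ ha ht
  have l2 : (b + s) ^ (p - 2) * s * s ≤ 2 * phiShift p δ a s := phiShift_lower p δ a s hp hp2 hδ ha hs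
  have m1 : ε / 2 * ((b + t) ^ (p - 2) * t * t) ≤ ε / 2 * (2 * phiShift p δ a t) :=
    mul_le_mul_of_nonneg_left l1 (by positivity)
  have m2 : (2 * K + 2) * ((b + s) ^ (p - 2) * s * s) ≤ (2 * K + 2) * (2 * phiShift p δ a s) :=
    mul_le_mul_of_nonneg_left l2 (by linarith)
  have r1 : ε / 2 * (2 * phiShift p δ a t) = ε * phiShift p δ a t := by ring
  have r2 : (2 * K + 2) * (2 * phiShift p δ a s) = (4 * K + 4) * phiShift p δ a s := by ring
  linarith [core, m1, m2]
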